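/- arXiv:2505.02002 — 3 statements merged into one kernel-verified Lean document; each statement's English description precedes it below -/
import Mathlib

section
/- Let B be symmetric PSD with operator norm at most 1, ξ ∈ R^p, 0 < ω < 1. Then ξ^T ((I - ωB)^{-1} - (I + ωB)^{-1}) ξ ≤ (2ω / ((1+ω)(1-ω))) ξ^T B ξ. -/
/-! Both sides are the quadratic forms of functions of `B` under the continuous functional
calculus: the left one of `g t = (1 - ω t)⁻¹ - (1 + ω t)⁻¹`, the right one of
`h t = 2ω t / ((1 + ω)(1 - ω))`. The spectrum of `B` lies in `[0, 1]`, where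
`g t = 2ω t / ((1 - ω t)(1 + ω t)) ≤ h t`, and the functional calculus is monotone. -/

open Matrix
open scoped MatrixOrder

theorem inv_one_sub_mul_sub_inv_one_add_mul_le {ω t : ℝ} (hω0 : 0 < ω) (hω1 : ω < 1)
    (ht0 : 0 ≤ t) (ht1 : t ≤ 1) :
    (1 - ω * t)⁻¹ - (1 + ω * t)⁻¹ ≤ 2 * ω / ((1 + ω) * (1 - ω)) * t := by
  have hωt : ω * t ≤ ω := mul_le_of_le_one_right hω0.le ht1
  have hminus : 0 < 1 - ω * t := by linarith
  have hplus : 0 < 1 + ω * t := by nlinarith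
  have hden : (1 + ω) * (1 - ω) ≤ (1 + ω * t) * (1 - ω * t) := by
    nlinarith [mul_nonneg (sub_nonneg.2 hωt) (by positivity : 0 ≤ ω + ω * t)]
  calc (1 - ω * t)⁻¹ - (1 + ω * t)⁻¹ = 2 * ω * t / ((1 + ω * t) * (1 - ω * t)) := by
        field_simp
        ring
    _ ≤ 2 * ω * t / ((1 + ω) * (1 - ω)) := by gcongr
    _ = 2 * ω / ((1 + ω) * (1 - ω)) * t := by ring

theorem cfc_inv_one_add_mul {A : Type*} [Ring A] [StarRing A] [TopologicalSpace A] [Algebra ℝ A]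
    [ContinuousFunctionalCalculus ℝ A IsSelfAdjoint] {a : A} (ha : IsSelfAdjoint a) (c : ℝ)
    (h : ∀ x ∈ spectrum ℝ a, 1 + c * x ≠ 0) :
    cfc (fun x => (1 + c * x)⁻¹) a = Ring.inverse (1 + c • a) := by
  rw [cfc_inv (fun x => 1 + c * x) a h, cfc_const_add 1 (c * ·) a, cfc_const_mul_id c a, map_one]

namespace Matrix

variable {n : Type*} [Fintype n]

theorem dotProduct_mulVec_le_of_le {A B : Matrix n n ℝ} (h : A ≤ B) (x : n → ℝ) :
    x ⬝ᵥ A *ᵥ x ≤ x ⬝ᵥ B *ᵥ x := by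
  simpa [sub_mulVec, dotProduct_sub] using (le_iff.1 h).dotProduct_mulVec_nonneg x

theorem PosSemidef.spectrum_subset_Icc_of_dotProduct_mulVec_le [DecidableEq n]
    {A : Matrix n n ℝ} (hA : A.PosSemidef) (h : ∀ x : n → ℝ, x ⬝ᵥ A *ᵥ x ≤ x ⬝ᵥ x) :
    spectrum ℝ A ⊆ Set.Icc 0 1 := by
  have hle : A ≤ algebraMap ℝ _ 1 := by
    rw [map_one]
    refine PosSemidef.of_dotProduct_mulVec_nonneg (isHermitian_one.sub hA.isHermitian) fun x => ?_
    simpa [sub_mulVec, dotProduct_sub] using h x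
  exact fun x hx => ⟨spectrum_nonneg_of_nonneg hA.nonneg hx,
    (le_algebraMap_iff_spectrum_le hA.isHermitian).1 hle x hx⟩

end Matrix

/-- `ξᵀ((I - ωB)⁻¹ - (I + ωB)⁻¹)ξ ≤ (2ω/((1+ω)(1-ω))) ξᵀBξ`. -/
theorem stmt4 {p : ℕ} (B : Matrix (Fin p) (Fin p) ℝ)
    (hB : B.PosSemidef) (hBnorm : ∀ x : Fin p → ℝ, x ⬝ᵥ B *ᵥ x ≤ x ⬝ᵥ x)
    (ξ : Fin p → ℝ) (ω : ℝ) (hω0 : 0 < ω) (hω1 : ω < 1) :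
    ξ ⬝ᵥ ((1 - ω • B)⁻¹ - (1 + ω • B)⁻¹) *ᵥ ξ ≤
      (2 * ω / ((1 + ω) * (1 - ω))) * (ξ ⬝ᵥ B *ᵥ ξ) := by
  have hspec := hB.spectrum_subset_Icc_of_dotProduct_mulVec_le hBnorm
  have hB' : IsSelfAdjoint B := hB.isHermitian
  have hminus : cfc (fun x => (1 + -ω * x)⁻¹) B = (1 - ω • B)⁻¹ := by
    rw [cfc_inv_one_add_mul hB', neg_smul, ← sub_eq_add_neg, nonsing_inv_eq_ringInverse]
    intro x hx
    obtain ⟨hx0, hx1⟩ := hspec hx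
    nlinarith
  have hplus : cfc (fun x => (1 + ω * x)⁻¹) B = (1 + ω • B)⁻¹ := by
    rw [cfc_inv_one_add_mul hB', nonsing_inv_eq_ringInverse]
    intro x hx
    obtain ⟨hx0, hx1⟩ := hspec hx
    nlinarith
  have hcont (f : ℝ → ℝ) : ContinuousOn f (spectrum ℝ B) := B.finite_real_spectrum.continuousOn f
  have hmono : cfc (fun x => (1 + -ω * x)⁻¹ - (1 + ω * x)⁻¹) B ≤
      cfc (fun x => 2 * ω / ((1 + ω) * (1 - ω)) * x) B := by
    refine cfc_mono (fun x hx => ?_) (hcont _) (hcont _)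
    obtain ⟨hx0, hx1⟩ := hspec hx
    simpa [← sub_eq_add_neg] using inv_one_sub_mul_sub_inv_one_add_mul_le hω0 hω1 hx0 hx1
  rw [cfc_sub _ _ _ (hcont _) (hcont _), hminus, hplus, cfc_const_mul_id _ B] at hmono
  simpa [smul_mulVec, dotProduct_smul] using dotProduct_mulVec_le_of_le hmono ξ
end

section
/- Let B be symmetric PSD with operator norm at most 1, ξ ∈ R^p, 0 < ω < 1. Then the vector ξ - (I - ωB)^{-1} ξ satisfies (ξ - (I-ωB)^{-1}ξ)^T (I - ωB) (ξ - (I-ωB)^{-1}ξ) ≤ (ω^2/(1-ω)) ξ^T B ξ. -/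
/-!
With `M = 1 - ωB` and `z = M⁻¹Bξ` we have `ξ - M⁻¹ξ = -ω z`, so the left-hand side is
`ω² zᵀMz = ω² zᵀBξ`. Positivity of `B` at `(1 - ω)z - ξ` gives
`2(1 - ω) zᵀBξ ≤ (1 - ω)² zᵀBz + ξᵀBξ`, while `B ≤ 1` gives `(1 - ω) zᵀBz ≤ zᵀMz = zᵀBξ`;
together `(1 - ω) zᵀMz ≤ ξᵀBξ`.
-/

open Matrix

namespace Matrix

variable {n : Type*} [Fintype n]

lemma IsSymm.dotProduct_mulVec_comm {B : Matrix n n ℝ} (hB : B.IsSymm) (u v : n → ℝ) :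
    u ⬝ᵥ B *ᵥ v = v ⬝ᵥ B *ᵥ u := by
  conv_lhs => rw [← hB.eq]
  exact dotProduct_transpose_mulVec B u v

lemma PosSemidef.two_mul_dotProduct_mulVec_le {B : Matrix n n ℝ} (hB : B.PosSemidef) (s : ℝ)
    (u v : n → ℝ) :
    2 * s * (u ⬝ᵥ B *ᵥ v) ≤ s ^ 2 * (u ⬝ᵥ B *ᵥ u) + v ⬝ᵥ B *ᵥ v := by
  have hsymm : B.IsSymm := isHermitian_iff_isSymm.mp hB.isHermitian
  have h := hB.dotProduct_mulVec_nonneg (s • u - v)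
  simp only [star_trivial, mulVec_sub, mulVec_smul, dotProduct_sub, sub_dotProduct,
    dotProduct_smul, smul_dotProduct, smul_eq_mul, hsymm.dotProduct_mulVec_comm v u] at h
  nlinarith

lemma sub_nonsing_inv_mulVec {R : Type*} [CommRing R] [DecidableEq n] {A : Matrix n n R}
    (hA : IsUnit A.det) (x : n → R) : x - A⁻¹ *ᵥ x = A⁻¹ *ᵥ ((A - 1) *ᵥ x) := by
  rw [sub_mulVec, mulVec_sub, mulVec_mulVec, nonsing_inv_mul A hA, one_mulVec]

variable [DecidableEq n]

lemma dotProduct_one_sub_smul_mulVec (B : Matrix n n ℝ) (ω : ℝ) (x : n → ℝ) :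
    x ⬝ᵥ (1 - ω • B) *ᵥ x = x ⬝ᵥ x - ω * (x ⬝ᵥ B *ᵥ x) := by
  simp only [sub_mulVec, one_mulVec, smul_mulVec, dotProduct_sub, dotProduct_smul, smul_eq_mul]

lemma PosSemidef.posDef_one_sub_smul {B : Matrix n n ℝ} (hB : B.PosSemidef)
    (hB_le : ∀ x : n → ℝ, x ⬝ᵥ B *ᵥ x ≤ x ⬝ᵥ x) {ω : ℝ} (hω : ω < 1) :
    (1 - ω • B).PosDef := by
  refine .of_dotProduct_mulVec_pos
    (isHermitian_one.sub (hB.isHermitian.smul (IsSelfAdjoint.all ω))) fun x hx => ?_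
  have hxx : 0 < x ⬝ᵥ x := dotProduct_self_star_pos_iff.mpr hx
  have hxBx : 0 ≤ x ⬝ᵥ B *ᵥ x := by simpa using hB.dotProduct_mulVec_nonneg x
  rw [star_trivial, dotProduct_one_sub_smul_mulVec]
  rcases le_or_gt ω 0 with hω0 | hω0
  · nlinarith
  · nlinarith [hB_le x]

lemma PosSemidef.one_sub_mul_dotProduct_mulVec_le {B : Matrix n n ℝ} (hB : B.PosSemidef)
    (hB_le : ∀ x : n → ℝ, x ⬝ᵥ B *ᵥ x ≤ x ⬝ᵥ x) {ω : ℝ} (hω : ω < 1) {z ξ : n → ℝ}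
    (hz : (1 - ω • B) *ᵥ z = B *ᵥ ξ) :
    (1 - ω) * (z ⬝ᵥ (1 - ω • B) *ᵥ z) ≤ ξ ⬝ᵥ B *ᵥ ξ := by
  have h_amgm := hB.two_mul_dotProduct_mulVec_le (1 - ω) z ξ
  have h_le : (1 - ω) * (z ⬝ᵥ B *ᵥ z) ≤ z ⬝ᵥ (1 - ω • B) *ᵥ z := by
    rw [dotProduct_one_sub_smul_mulVec]; linarith [hB_le z]
  rw [hz] at h_le ⊢
  nlinarith

end Matrix

theorem stmt5_general {p : ℕ} (B : Matrix (Fin p) (Fin p) ℝ)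
    (hB : B.PosSemidef) (hBnorm : ∀ x : Fin p → ℝ, x ⬝ᵥ B *ᵥ x ≤ x ⬝ᵥ x)
    (ξ : Fin p → ℝ) (ω : ℝ) (hω1 : ω < 1) :
    (ξ - (1 - ω • B)⁻¹ *ᵥ ξ) ⬝ᵥ (1 - ω • B) *ᵥ (ξ - (1 - ω • B)⁻¹ *ᵥ ξ) ≤
      ω ^ 2 / (1 - ω) * (ξ ⬝ᵥ B *ᵥ ξ) := by
  set M := 1 - ω • B
  have hM : IsUnit M.det :=
    (isUnit_iff_isUnit_det M).mp (hB.posDef_one_sub_smul hBnorm hω1).isUnit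
  set z := M⁻¹ *ᵥ (B *ᵥ ξ)
  have hz : M *ᵥ z = B *ᵥ ξ := by rw [mulVec_mulVec, mul_nonsing_inv M hM, one_mulVec]
  have hη : ξ - M⁻¹ *ᵥ ξ = (-ω) • z := by
    rw [sub_nonsing_inv_mulVec hM, show M - 1 = (-ω) • B by simp [M], smul_mulVec, mulVec_smul]
  have key := hB.one_sub_mul_dotProduct_mulVec_le hBnorm hω1 hz
  rw [hη, mulVec_smul, dotProduct_smul, smul_dotProduct, smul_eq_mul, smul_eq_mul,
    div_mul_eq_mul_div, le_div_iff₀ (by linarith)]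
  nlinarith [sq_nonneg ω]

/-- The vector `ξ - (I - ωB)⁻¹ξ` is small in the `(I - ωB)`-norm. -/
theorem stmt5 {p : ℕ} (B : Matrix (Fin p) (Fin p) ℝ)
    (hB : B.PosSemidef) (hBnorm : ∀ x : Fin p → ℝ, x ⬝ᵥ B *ᵥ x ≤ x ⬝ᵥ x)
    (ξ : Fin p → ℝ) (ω : ℝ) (hω0 : 0 < ω) (hω1 : ω < 1) :
    (ξ - (1 - ω • B)⁻¹ *ᵥ ξ) ⬝ᵥ (1 - ω • B) *ᵥ (ξ - (1 - ω • B)⁻¹ *ᵥ ξ) ≤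
      ω ^ 2 / (1 - ω) * (ξ ⬝ᵥ B *ᵥ ξ) :=
  stmt5_general B hB hBnorm ξ ω hω1
end

section
/- Let U be a symmetric p x p matrix with U ≥ I (in the positive semidefinite order), let r > 0, τ ≥ 0 with τ r ≤ 1/3, and let s ∈ R^p satisfy (3/4) r ≤ ||s|| ≤ r. Then max over ||u|| ≤ r of ( (τ/3)||u||^3 - (u-s)^T U (u-s) ) ≤ (τ/2) ||s||^3. -/
/-!
Since `U ≥ I`, the quadratic term is at least `‖u - s‖² ≥ (‖u‖ - ‖s‖)²`, so everything reduces to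
the scalar inequality `τ a³/3 - (a - b)² ≤ τ b³/2` for `a, b ∈ [0, r]`. For it, compare
`a³/3 - b³/2` with `(a + 2b)(a - b)² ≤ 3r(a - b)²` and use `3τr ≤ 1`.
-/

open Matrix

noncomputable def vnorm {p : ℕ} (x : Fin p → ℝ) : ℝ := Real.sqrt (x ⬝ᵥ x)

lemma vnorm_nonneg {p : ℕ} (x : Fin p → ℝ) : 0 ≤ vnorm x := Real.sqrt_nonneg _

lemma vnorm_eq_norm_toLp {p : ℕ} (x : Fin p → ℝ) :
    vnorm x = ‖(WithLp.toLp 2 x : EuclideanSpace ℝ (Fin p))‖ := by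
  rw [norm_eq_sqrt_real_inner, EuclideanSpace.inner_toLp_toLp, star_trivial]
  rfl

lemma sq_vnorm {p : ℕ} (x : Fin p → ℝ) : vnorm x ^ 2 = x ⬝ᵥ x := by
  rw [vnorm_eq_norm_toLp, ← real_inner_self_eq_norm_sq, EuclideanSpace.inner_toLp_toLp,
    star_trivial]

lemma abs_vnorm_sub_vnorm_le {p : ℕ} (u s : Fin p → ℝ) :
    |vnorm u - vnorm s| ≤ vnorm (u - s) := by
  simpa only [vnorm_eq_norm_toLp, WithLp.toLp_sub] using abs_norm_sub_norm_le _ _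

lemma dotProduct_self_le_dotProduct_mulVec {n : Type*} [Fintype n] [DecidableEq n]
    {U : Matrix n n ℝ} (hU : (U - 1).PosSemidef) (x : n → ℝ) : x ⬝ᵥ x ≤ x ⬝ᵥ U *ᵥ x := by
  have h := hU.dotProduct_mulVec_nonneg x
  rw [star_trivial, sub_mulVec, one_mulVec, dotProduct_sub] at h
  linarith

lemma cube_div_three_sub_cube_div_two_le {a b r : ℝ} (ha : 0 ≤ a) (hb : 0 ≤ b) (har : a ≤ r)
    (hbr : b ≤ r) : a ^ 3 / 3 - b ^ 3 / 2 ≤ 3 * r * (a - b) ^ 2 := by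
  have h : (a + 2 * b) * (a - b) ^ 2 ≤ 3 * r * (a - b) ^ 2 := by gcongr; linarith
  -- the rest is `4a³ - 18ab² + 15b³ ≥ 0` on the positive quadrant (minimum at `a = √(3/2) b`)
  nlinarith [mul_nonneg ha (sq_nonneg (5 * a - 6 * b)),
    mul_nonneg hb (sq_nonneg (80 * a - 99 * b)), pow_nonneg hb 3]

lemma cube_sub_sq_le {a b r τ : ℝ} (hτ : 0 ≤ τ) (hτr : τ * r ≤ 1 / 3) (ha : 0 ≤ a) (hb : 0 ≤ b)
    (har : a ≤ r) (hbr : b ≤ r) : τ / 3 * a ^ 3 - (a - b) ^ 2 ≤ τ / 2 * b ^ 3 := by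
  have h : τ * (a ^ 3 / 3 - b ^ 3 / 2) ≤ (a - b) ^ 2 :=
    calc τ * (a ^ 3 / 3 - b ^ 3 / 2)
        ≤ τ * (3 * r * (a - b) ^ 2) := by
          gcongr; exact cube_div_three_sub_cube_div_two_le ha hb har hbr
      _ = 3 * (τ * r) * (a - b) ^ 2 := by ring
      _ ≤ 1 * (a - b) ^ 2 := by gcongr; linarith
      _ = (a - b) ^ 2 := one_mul _
  linarith

theorem stmt7_general {p : ℕ} (U : Matrix (Fin p) (Fin p) ℝ)
    (hU : (U - 1).PosSemidef)
    (r τ : ℝ) (hτ : 0 ≤ τ) (hτr : τ * r ≤ 1 / 3)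
    (s : Fin p → ℝ) (hs2 : vnorm s ≤ r) :
    ∀ u : Fin p → ℝ, vnorm u ≤ r →
      τ / 3 * vnorm u ^ 3 - (u - s) ⬝ᵥ U *ᵥ (u - s) ≤ τ / 2 * vnorm s ^ 3 := by
  intro u hu
  have hquad : (vnorm u - vnorm s) ^ 2 ≤ (u - s) ⬝ᵥ U *ᵥ (u - s) :=
    calc (vnorm u - vnorm s) ^ 2
        ≤ vnorm (u - s) ^ 2 := by
          rw [← sq_abs]; exact pow_le_pow_left₀ (abs_nonneg _) (abs_vnorm_sub_vnorm_le u s) 2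
      _ = (u - s) ⬝ᵥ (u - s) := sq_vnorm _
      _ ≤ (u - s) ⬝ᵥ U *ᵥ (u - s) := dotProduct_self_le_dotProduct_mulVec hU _
  have hscalar := cube_sub_sq_le hτ hτr (vnorm_nonneg u) (vnorm_nonneg s) hu hs2
  linarith

/-- Lemma on cubic-penalized quadratic maximization over a ball. -/
theorem stmt7 {p : ℕ} (U : Matrix (Fin p) (Fin p) ℝ)
    (hUsym : U.IsHermitian) (hU : (U - 1).PosSemidef)
    (r τ : ℝ) (hr : 0 < r) (hτ : 0 ≤ τ) (hτr : τ * r ≤ 1 / 3)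
    (s : Fin p → ℝ) (hs1 : (3 / 4) * r ≤ vnorm s) (hs2 : vnorm s ≤ r) :
    ∀ u : Fin p → ℝ, vnorm u ≤ r →
      τ / 3 * vnorm u ^ 3 - (u - s) ⬝ᵥ U *ᵥ (u - s) ≤ τ / 2 * vnorm s ^ 3 :=
  stmt7_general U hU r τ hτ hτr s hs2
end
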